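/- arXiv:2404.02495 — 3 statements merged into one kernel-verified Lean document; each statement's English description precedes it below -/
import Mathlib

section
/- Let P = conv(u_0, …, u_n) ⊆ ℝ^n be a full-dimensional lattice simplex, fix an integer k with 2 ≤ k ≤ min_{j≠0} l_{0j}, let t = (t_1, …, t_n) ∈ ℤ_{≥0}^n, and let P_{0,k,t} = P_{0,k} + Σ_{j=1}^n t_j ũ_{0j} be the translated k-dilation. Then the following are equivalent: (i) P_{0,k,t} ⊆ P; (ii) for every 1 ≤ s ≤ n, the point ((l_{0s} − r_{0s,k})/l_{0s})·u_s + (r_{0s,k}/l_{0s})·u_0 + Σ_{j=1}^n t_j ũ_{0j} lies in P; (iii) Σ_{j=1}^n t_j/l_{0j} ≤ min_{1≤s≤n} r_{0s,k}/l_{0s}. -/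
/-!
By affine independence of the vertices, a point `u₀ + ∑ c_j (u_j - u₀)` with all `c_j ≥ 0` lies
in `P` exactly when `∑ c_j ≤ 1`. The translated dilation is the convex hull of its translated
vertices; the one coming from `u_s` has coefficients
`t_j / l_{0j} + δ_{js} (1 - r_{0s,k} / l_{0s})`, which turns `∑ c_j ≤ 1` into the bound of (iii),
while the translated apex only needs `∑ t_j / l_{0j} ≤ 1`, already implied by `r_{0s,k} ≤ l_{0s}`.
-/

open Finset Pointwise

noncomputable section

/-- The real point corresponding to a lattice point. -/
def toR {n : ℕ} (v : Fin n → ℤ) : Fin n → ℝ := fun x => (v x : ℝ)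

/-- The lattice simplex (as a subset of `ℝ^n`) with the given lattice vertices. -/
def lsimplex {n m : ℕ} (u : Fin m → Fin n → ℤ) : Set (Fin n → ℝ) :=
  convexHull ℝ (Set.range fun i => toR (u i))

/-- The lattice length `l_{ij}` of the edge `u_i u_j`:
the gcd of the coordinates of `u_j - u_i`. -/
def latLen {n m : ℕ} (u : Fin m → Fin n → ℤ) (i j : Fin m) : ℕ :=
  Finset.univ.gcd fun x => (u j x - u i x).natAbs

/-- `r_{ij,k}`: the least nonnegative residue of `l_{ij}` modulo `k`. -/
def rmod {n m : ℕ} (u : Fin m → Fin n → ℤ) (i j : Fin m) (k : ℕ) : ℕ :=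
  latLen u i j % k

/-- The vertices of the `k`-dilation `P_{i,k}`: the vertex `u_i` together with, for `j ≠ i`,
the points `((l_{ij} - r_{ij,k})/l_{ij})·u_j + (r_{ij,k}/l_{ij})·u_i`. -/
def dilVert {n m : ℕ} (u : Fin m → Fin n → ℤ) (i : Fin m) (k : ℕ) (j : Fin m) :
    Fin n → ℝ :=
  if j = i then toR (u i)
  else
    ((((latLen u i j : ℝ) - (rmod u i j k : ℝ)) / (latLen u i j : ℝ)) • toR (u j))
      + (((rmod u i j k : ℝ) / (latLen u i j : ℝ)) • toR (u i))

/-- The `k`-dilation `P_{i,k}`. -/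
def dil {n m : ℕ} (u : Fin m → Fin n → ℤ) (i : Fin m) (k : ℕ) : Set (Fin n → ℝ) :=
  convexHull ℝ (Set.range (dilVert u i k))

/-- The primitive edge vector `ũ_{ij} = (u_j - u_i)/l_{ij}`. -/
def primVec {n m : ℕ} (u : Fin m → Fin n → ℤ) (i j : Fin m) : Fin n → ℝ :=
  (latLen u i j : ℝ)⁻¹ • (toR (u j) - toR (u i))

/-- The translated `k`-dilation `P_{i,k,t} = P_{i,k} + Σ_{j ≠ i} t_j ũ_{ij}`. -/
def dilT {n m : ℕ} (u : Fin m → Fin n → ℤ) (i : Fin m) (k : ℕ) (t : Fin m → ℕ) :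
    Set (Fin n → ℝ) :=
  (fun y => y + ∑ j ∈ Finset.univ.erase i, (t j : ℝ) • primVec u i j) '' dil u i k

open Set

section Convex

variable {𝕜 E ι : Type*} [Field 𝕜] [LinearOrder 𝕜] [IsStrictOrderedRing 𝕜]
  [AddCommGroup E] [Module 𝕜 E] [Fintype ι] {p : ι → E}

theorem AffineIndependent.sum_smul_mem_convexHull_range_iff (hp : AffineIndependent 𝕜 p)
    {w : ι → 𝕜} (hw : ∑ i, w i = 1) :
    ∑ i, w i • p i ∈ convexHull 𝕜 (range p) ↔ ∀ i, 0 ≤ w i := by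
  refine ⟨fun hmem i => ?_, fun hw₀ =>
    mem_convexHull_of_exists_fintype w p hw₀ hw (fun i => mem_range_self i) rfl⟩
  obtain ⟨s, v, hv₀, hv, hsv⟩ := (convexHull_range_eq_exists_affineCombination p).subset hmem
  rw [← Finset.affineCombination_eq_linear_combination _ _ _ hw] at hsv
  have hvw := congr_fun (hp.indicator_eq_of_affineCombination_eq s _ v w hv hw hsv) i
  rw [Finset.coe_univ, Set.indicator_univ] at hvw
  by_cases hi : i ∈ s
  · rw [← hvw, Set.indicator_of_mem (Finset.mem_coe.2 hi)]
    exact hv₀ i hi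
  · rw [← hvw, Set.indicator_of_notMem (Finset.mem_coe.not.2 hi)]

theorem AffineIndependent.add_sum_smul_sub_mem_convexHull_range_iff [DecidableEq ι]
    (hp : AffineIndependent 𝕜 p) (i : ι) {c : ι → 𝕜} (hc : ∀ j ≠ i, 0 ≤ c j) :
    p i + ∑ j ∈ Finset.univ.erase i, c j • (p j - p i) ∈ convexHull 𝕜 (range p) ↔
      ∑ j ∈ Finset.univ.erase i, c j ≤ 1 := by
  set w := Function.update c i (1 - ∑ j ∈ Finset.univ.erase i, c j)
  have hw_erase : ∀ j ∈ Finset.univ.erase i, w j = c j := fun j hj =>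
    Function.update_of_ne (Finset.ne_of_mem_erase hj) _ _
  have hwi : w i = 1 - ∑ j ∈ Finset.univ.erase i, c j := Function.update_self _ _ _
  have hw : ∑ j, w j = 1 := by
    rw [← Finset.add_sum_erase _ _ (Finset.mem_univ i), Finset.sum_congr rfl hw_erase, hwi,
      sub_add_cancel]
  have hpoint : ∑ j, w j • p j = p i + ∑ j ∈ Finset.univ.erase i, c j • (p j - p i) := by
    rw [← Finset.add_sum_erase _ _ (Finset.mem_univ i),
      Finset.sum_congr rfl fun j hj => by rw [hw_erase j hj], hwi]
    simp only [smul_sub, Finset.sum_sub_distrib, ← Finset.sum_smul, sub_smul, one_smul]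
    abel
  rw [← hpoint, hp.sum_smul_mem_convexHull_range_iff hw, Function.forall_update_iff _
    fun _ x => 0 ≤ x, sub_nonneg]
  exact and_iff_left hc

end Convex

theorem Convex.image_add_const_convexHull_range_subset_iff {𝕜 E ι : Type*} [Ring 𝕜]
    [PartialOrder 𝕜] [AddCommGroup E] [Module 𝕜 E] {C : Set E} (hC : Convex 𝕜 C)
    (q : ι → E) (v : E) :
    (· + v) '' convexHull 𝕜 (range q) ⊆ C ↔ ∀ j, q j + v ∈ C := by
  rw [image_subset_iff, (hC.translate_preimage_left v).convexHull_subset_iff, range_subset_iff]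
  rfl

section LatticeSimplex

variable {n m : ℕ} (u : Fin m → Fin n → ℤ)

theorem latLen_pos (hu : AffineIndependent ℝ fun i => toR (u i)) {i j : Fin m} (hij : i ≠ j) :
    0 < latLen u i j := by
  refine Nat.pos_of_ne_zero fun hl => hij (hu.injective (funext fun x => ?_))
  have hx := (Finset.gcd_eq_zero_iff.1 hl) x (Finset.mem_univ x)
  simp [toR, sub_eq_zero.1 (Int.natAbs_eq_zero.1 hx)]

theorem rmod_le_latLen (i j : Fin m) (k : ℕ) : rmod u i j k ≤ latLen u i j :=
  Nat.mod_le _ _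

theorem natCast_smul_primVec (i j : Fin m) (t : ℕ) :
    (t : ℝ) • primVec u i j = ((t : ℝ) / latLen u i j) • (toR (u j) - toR (u i)) := by
  rw [primVec, smul_smul, div_eq_mul_inv]

theorem dilVert_of_ne {i j : Fin m} (hji : j ≠ i) (hl : latLen u i j ≠ 0) (k : ℕ) :
    dilVert u i k j =
      toR (u i) + (1 - (rmod u i j k : ℝ) / latLen u i j) • (toR (u j) - toR (u i)) := by
  have hl' : (latLen u i j : ℝ) ≠ 0 := Nat.cast_ne_zero.2 hl
  rw [dilVert, if_neg hji, sub_div, div_self hl']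
  simp only [smul_sub, sub_smul, one_smul]
  abel

variable {u} {i : Fin m}

theorem dilVert_self_add_sum_smul_primVec_mem_lsimplex_iff
    (hu : AffineIndependent ℝ fun i => toR (u i)) (k : ℕ) (t : Fin m → ℕ) :
    dilVert u i k i + ∑ j ∈ Finset.univ.erase i, (t j : ℝ) • primVec u i j ∈ lsimplex u ↔
      ∑ j ∈ Finset.univ.erase i, (t j : ℝ) / latLen u i j ≤ 1 := by
  simp only [dilVert, if_pos, natCast_smul_primVec]
  exact hu.add_sum_smul_sub_mem_convexHull_range_iff i fun j _ => by positivity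

theorem dilVert_add_sum_smul_primVec_mem_lsimplex_iff
    (hu : AffineIndependent ℝ fun i => toR (u i)) (k : ℕ) (t : Fin m → ℕ) {s : Fin m} (hs : s ≠ i) :
    dilVert u i k s + ∑ j ∈ Finset.univ.erase i, (t j : ℝ) • primVec u i j ∈ lsimplex u ↔
      ∑ j ∈ Finset.univ.erase i, (t j : ℝ) / latLen u i j ≤ (rmod u i s k : ℝ) / latLen u i s := by
  set a : ℝ := 1 - (rmod u i s k : ℝ) / latLen u i s
  set c : Fin m → ℝ := fun j => (t j : ℝ) / latLen u i j + if j = s then a else 0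
  have hs' : s ∈ Finset.univ.erase i := Finset.mem_erase.2 ⟨hs, Finset.mem_univ s⟩
  have ha : 0 ≤ a := sub_nonneg.2 <| div_le_one_of_le₀
    (Nat.cast_le.2 (rmod_le_latLen u i s k)) (Nat.cast_nonneg _)
  have hc : ∀ j ≠ i, 0 ≤ c j := fun j _ => by positivity
  have hpoint : dilVert u i k s + ∑ j ∈ Finset.univ.erase i, (t j : ℝ) • primVec u i j =
      toR (u i) + ∑ j ∈ Finset.univ.erase i, c j • (toR (u j) - toR (u i)) := by
    simp only [c, dilVert_of_ne u hs (latLen_pos u hu hs.symm).ne', natCast_smul_primVec,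
      add_smul, ite_smul, zero_smul, Finset.sum_add_distrib, Finset.sum_ite_eq', if_pos hs']
    abel
  have hsum : ∑ j ∈ Finset.univ.erase i, c j =
      ∑ j ∈ Finset.univ.erase i, (t j : ℝ) / latLen u i j + a := by
    simp only [c, Finset.sum_add_distrib, Finset.sum_ite_eq', if_pos hs']
  rw [hpoint, lsimplex, hu.add_sum_smul_sub_mem_convexHull_range_iff i hc, hsum]
  constructor <;> intro h <;> linarith

theorem dilT_subset_lsimplex_iff (hu : AffineIndependent ℝ fun i => toR (u i))
    (k : ℕ) (t : Fin m → ℕ) :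
    dilT u i k t ⊆ lsimplex u ↔ ∀ s ∈ Finset.univ.erase i,
      ∑ j ∈ Finset.univ.erase i, (t j : ℝ) / latLen u i j ≤ (rmod u i s k : ℝ) / latLen u i s := by
  rw [dilT, dil, lsimplex, (convex_convexHull ℝ _).image_add_const_convexHull_range_subset_iff]
  refine ⟨fun h s hs =>
    (dilVert_add_sum_smul_primVec_mem_lsimplex_iff hu k t (Finset.ne_of_mem_erase hs)).1 (h s),
    fun h j => ?_⟩
  by_cases hj : j = i
  · subst hj
    refine (dilVert_self_add_sum_smul_primVec_mem_lsimplex_iff hu k t).2 ?_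
    rcases (Finset.univ.erase j).eq_empty_or_nonempty with hE | ⟨s, hs⟩
    · simp [hE]
    · exact (h s hs).trans <| div_le_one_of_le₀
        (Nat.cast_le.2 (rmod_le_latLen u j s k)) (Nat.cast_nonneg _)
  · exact (dilVert_add_sum_smul_primVec_mem_lsimplex_iff hu k t hj).2
      (h j (Finset.mem_erase.2 ⟨hj, Finset.mem_univ j⟩))

end LatticeSimplex

theorem translated_dilation_subset_iff_general
    (n : ℕ) (u : Fin (n + 1) → Fin n → ℤ)
    (hind : AffineIndependent ℝ fun i => toR (u i))
    (k : ℕ)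
    (t : Fin (n + 1) → ℕ) :
    (dilT u 0 k t ⊆ lsimplex u ↔
      ∀ s ∈ Finset.univ.erase (0 : Fin (n + 1)),
        ∑ j ∈ Finset.univ.erase (0 : Fin (n + 1)), (t j : ℝ) / (latLen u 0 j : ℝ) ≤
          (rmod u 0 s k : ℝ) / (latLen u 0 s : ℝ)) ∧
    ((∀ s ∈ Finset.univ.erase (0 : Fin (n + 1)),
        (dilVert u 0 k s + ∑ j ∈ Finset.univ.erase (0 : Fin (n + 1)),
          (t j : ℝ) • primVec u 0 j) ∈ lsimplex u) ↔
      ∀ s ∈ Finset.univ.erase (0 : Fin (n + 1)),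
        ∑ j ∈ Finset.univ.erase (0 : Fin (n + 1)), (t j : ℝ) / (latLen u 0 j : ℝ) ≤
          (rmod u 0 s k : ℝ) / (latLen u 0 s : ℝ)) :=
  ⟨dilT_subset_lsimplex_iff hind k t, forall₂_congr fun _ hs =>
    dilVert_add_sum_smul_primVec_mem_lsimplex_iff hind k t (Finset.ne_of_mem_erase hs)⟩

/-- for the translated dilation `P_{0,k,t}`, the following are equivalent:
(i) `P_{0,k,t} ⊆ P`; (ii) each translated vertex
`((l_{0s} − r_{0s,k})/l_{0s})·u_s + (r_{0s,k}/l_{0s})·u_0 + Σ_j t_j ũ_{0j}` lies in `P`;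
(iii) `Σ_j t_j/l_{0j} ≤ r_{0s,k}/l_{0s}` for every `1 ≤ s ≤ n`. -/
theorem translated_dilation_subset_iff
    (n : ℕ) (u : Fin (n + 1) → Fin n → ℤ)
    (hind : AffineIndependent ℝ fun i => toR (u i))
    (k : ℕ) (hk : 2 ≤ k)
    (hkl : ∀ j, j ≠ (0 : Fin (n + 1)) → k ≤ latLen u 0 j)
    (t : Fin (n + 1) → ℕ) (ht0 : t 0 = 0) :
    (dilT u 0 k t ⊆ lsimplex u ↔
      ∀ s ∈ Finset.univ.erase (0 : Fin (n + 1)),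
        ∑ j ∈ Finset.univ.erase (0 : Fin (n + 1)), (t j : ℝ) / (latLen u 0 j : ℝ) ≤
          (rmod u 0 s k : ℝ) / (latLen u 0 s : ℝ)) ∧
    ((∀ s ∈ Finset.univ.erase (0 : Fin (n + 1)),
        (dilVert u 0 k s + ∑ j ∈ Finset.univ.erase (0 : Fin (n + 1)),
          (t j : ℝ) • primVec u 0 j) ∈ lsimplex u) ↔
      ∀ s ∈ Finset.univ.erase (0 : Fin (n + 1)),
        ∑ j ∈ Finset.univ.erase (0 : Fin (n + 1)), (t j : ℝ) / (latLen u 0 j : ℝ) ≤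
          (rmod u 0 s k : ℝ) / (latLen u 0 s : ℝ)) :=
  translated_dilation_subset_iff_general n u hind k t
end
end

section
/- Let P = conv(u_0, u_1, u_2, u_3) ⊆ ℝ^3 be a full-dimensional lattice simplex with lattice length l(P) ≥ 2. Then there exist finitely many pairs (i, k), with 0 ≤ i ≤ 3 and integers k satisfying 2 ≤ k ≤ min_{j≠i} l_{ij}, such that P equals the union of the corresponding k-dilations P_{i,k}. -/
/-! A point `∑ μ_j u_j` of `P` (barycentric coordinates `μ`) lies in `P_{i,k}` as soon as
`∑_{j ≠ i} μ_j ρ(l_{ij}, k) ≤ μ_i`, where `ρ(l, k) = r / (l - r)` with `r = l mod k`: indeed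
`(1 + ρ) • v_j = u_j + ρ • u_i` for the vertex `v_j` of `P_{i,k}` on the edge `u_i u_j`.
Choosing `i` with `μ_i` maximal, it suffices that every vertex `i` admits an admissible `k` with
`∑_{j ≠ i} ρ(l_{ij}, k) ≤ 1`. In dimension 3 this is a statement about three lengths `≥ 2`:
`k = 2` works (`ρ(l, 2) ≤ 1/4` unless `l = 3`) unless two of them equal 3, and then `k = 3`
works, or `k = 2` if the third length is 2. -/

open Finset Pointwise

noncomputable section

open Set in
theorem exists_weights_of_mem_convexHull_range {ι E : Type*} [Fintype ι] [AddCommGroup E]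
    [Module ℝ E] {v : ι → E} {x : E} (hx : x ∈ convexHull ℝ (range v)) :
    ∃ μ : ι → ℝ, (∀ j, 0 ≤ μ j) ∧ ∑ j, μ j = 1 ∧ ∑ j, μ j • v j = x := by
  classical
  rw [convexHull_range_eq_exists_affineCombination] at hx
  obtain ⟨s, w, hw0, hw1, rfl⟩ := hx
  have hsum : ∑ j, indicator (↑s) w j = 1 := by
    rwa [Finset.sum_indicator_subset _ s.subset_univ]
  refine ⟨indicator (↑s) w, fun j => indicator_nonneg hw0 j, hsum, ?_⟩
  rw [Finset.affineCombination_indicator_subset _ _ s.subset_univ,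
    Finset.affineCombination_eq_linear_combination _ _ _ hsum]

theorem sum_smul_mem_convexHull_of_edge_points {ι E : Type*} [Fintype ι] [DecidableEq ι]
    [AddCommGroup E] [Module ℝ E] {v w : ι → E} {ρ μ : ι → ℝ} {i : ι}
    (hwi : w i = v i) (hw : ∀ j ≠ i, (1 + ρ j) • w j = v j + ρ j • v i)
    (hρ : ∀ j ≠ i, 0 ≤ ρ j) (hμ0 : ∀ j, 0 ≤ μ j) (hμ1 : ∑ j, μ j = 1)
    (hμi : ∑ j ∈ univ.erase i, μ j * ρ j ≤ μ i) :
    ∑ j, μ j • v j ∈ convexHull ℝ (Set.range w) := by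
  set ν := Function.update (fun j => μ j * (1 + ρ j)) i (μ i - ∑ j ∈ univ.erase i, μ j * ρ j)
  have hν : ∀ j ∈ univ.erase i, ν j = μ j * (1 + ρ j) := fun j hj =>
    Function.update_of_ne (ne_of_mem_erase hj) _ _
  have hν0 : ∀ j ∈ univ, 0 ≤ ν j := by
    intro j _
    rcases eq_or_ne j i with rfl | hj
    · simpa [ν] using hμi
    · rw [hν j (mem_erase_of_ne_of_mem hj (mem_univ j))]
      exact mul_nonneg (hμ0 j) (by linarith [hρ j hj])
  have hν1 : ∑ j, ν j = 1 := by
    rw [← add_sum_erase _ _ (mem_univ i), sum_congr rfl hν]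
    simp only [ν, Function.update_self, mul_add, mul_one, sum_add_distrib]
    rw [← hμ1, ← add_sum_erase _ _ (mem_univ i)]
    ring
  have hsum : ∑ j, ν j • w j = ∑ j, μ j • v j := by
    rw [← add_sum_erase _ _ (mem_univ i), ← add_sum_erase _ (fun j => μ j • v j) (mem_univ i)]
    have hedge : ∀ j ∈ univ.erase i, ν j • w j = μ j • v j + (μ j * ρ j) • v i := by
      intro j hj
      rw [hν j hj, mul_smul, hw j (ne_of_mem_erase hj), smul_add, smul_smul]
    rw [sum_congr rfl hedge, sum_add_distrib, ← sum_smul, hwi]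
    simp only [ν, Function.update_self, sub_smul]
    abel
  rw [← hsum]
  exact (convex_convexHull ℝ _).sum_mem hν0 hν1 fun j _ => subset_convexHull ℝ _ ⟨j, rfl⟩

def dilRatio (l k : ℕ) : ℝ := ((l % k : ℕ) : ℝ) / ((l - l % k : ℕ) : ℝ)

theorem dilRatio_nonneg (l k : ℕ) : 0 ≤ dilRatio l k := by
  unfold dilRatio; positivity

theorem dilRatio_eq_zero_of_dvd {l k : ℕ} (h : k ∣ l) : dilRatio l k = 0 := by
  simp [dilRatio, Nat.mod_eq_zero_of_dvd h]

theorem dilRatio_le_div {l k p q : ℕ} (hk : 0 < k) (hkl : k ≤ l) (hq : 0 < q)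
    (h : q * (l % k) ≤ p * (l - l % k)) : dilRatio l k ≤ p / q := by
  have hpos : 0 < l - l % k := Nat.sub_pos_of_lt ((Nat.mod_lt l hk).trans_le hkl)
  rw [dilRatio, div_le_div_iff₀ (by exact_mod_cast hpos) (by exact_mod_cast hq)]
  exact_mod_cast (mul_comm (l % k) q).trans_le h

theorem dilRatio_two_le {l : ℕ} (hl : 2 ≤ l) :
    dilRatio l 2 ≤ if l = 3 then 1 / 2 else 1 / 4 := by
  split_ifs with h3
  · exact_mod_cast dilRatio_le_div (p := 1) (q := 2) two_pos hl two_pos (by omega)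
  · exact_mod_cast dilRatio_le_div (p := 1) (q := 4) two_pos hl four_pos (by omega)

theorem dilRatio_three_le {l : ℕ} (hl : 3 ≤ l) : dilRatio l 3 ≤ 2 / 3 := by
  exact_mod_cast dilRatio_le_div (p := 2) (q := 3) three_pos hl three_pos (by omega)

theorem exists_dilRatio_three_three_add_le_one {c : ℕ} (hc : 2 ≤ c) :
    ∃ k, 2 ≤ k ∧ k ≤ 3 ∧ k ≤ c ∧ 2 * dilRatio 3 k + dilRatio c k ≤ 1 := by
  rcases hc.eq_or_lt with rfl | hc3
  · refine ⟨2, le_rfl, by norm_num, le_rfl, ?_⟩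
    have h32 := dilRatio_two_le (l := 3) (by norm_num)
    rw [dilRatio_eq_zero_of_dvd dvd_rfl]
    norm_num at h32 ⊢
    linarith
  · refine ⟨3, by norm_num, le_rfl, hc3, ?_⟩
    rw [dilRatio_eq_zero_of_dvd dvd_rfl]
    linarith [dilRatio_three_le hc3]

theorem exists_dilRatio_add_le_one {a b c : ℕ} (ha : 2 ≤ a) (hb : 2 ≤ b) (hc : 2 ≤ c) :
    ∃ k, 2 ≤ k ∧ k ≤ a ∧ k ≤ b ∧ k ≤ c ∧ dilRatio a k + dilRatio b k + dilRatio c k ≤ 1 := by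
  by_cases h33 : (a = 3 ∧ b = 3) ∨ (a = 3 ∧ c = 3) ∨ (b = 3 ∧ c = 3)
  · rcases h33 with ⟨rfl, rfl⟩ | ⟨rfl, rfl⟩ | ⟨rfl, rfl⟩
    · obtain ⟨k, hk2, hk3, hkc, hsum⟩ := exists_dilRatio_three_three_add_le_one hc
      exact ⟨k, hk2, hk3, hk3, hkc, by linarith⟩
    · obtain ⟨k, hk2, hk3, hkb, hsum⟩ := exists_dilRatio_three_three_add_le_one hb
      exact ⟨k, hk2, hk3, hkb, hk3, by linarith⟩
    · obtain ⟨k, hk2, hk3, hka, hsum⟩ := exists_dilRatio_three_three_add_le_one ha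
      exact ⟨k, hk2, hka, hk3, hk3, by linarith⟩
  · refine ⟨2, le_rfl, ha, hb, hc, ?_⟩
    have hA := dilRatio_two_le ha
    have hB := dilRatio_two_le hb
    have hC := dilRatio_two_le hc
    split_ifs at hA hB hC <;> first | tauto | linarith

theorem exists_sum_dilRatio_le_one {ι : Type*} [DecidableEq ι] {s : Finset ι} (hs : #s = 3)
    {l : ι → ℕ} (hl : ∀ j ∈ s, 2 ≤ l j) :
    ∃ k, 2 ≤ k ∧ (∀ j ∈ s, k ≤ l j) ∧ ∑ j ∈ s, dilRatio (l j) k ≤ 1 := by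
  obtain ⟨a, b, c, hab, hac, hbc, rfl⟩ := card_eq_three.1 hs
  obtain ⟨k, hk2, hka, hkb, hkc, hsum⟩ :=
    exists_dilRatio_add_le_one (hl a (by simp)) (hl b (by simp)) (hl c (by simp))
  refine ⟨k, hk2, by simp [hka, hkb, hkc], ?_⟩
  rw [sum_insert (by simp [hab, hac]), sum_pair hbc]
  linarith

section Dilation

variable {n m : ℕ} (u : Fin m → Fin n → ℤ) {i : Fin m} {k : ℕ}

theorem dil_subset_lsimplex (hl : ∀ j ≠ i, latLen u i j ≠ 0) : dil u i k ⊆ lsimplex u := by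
  refine convexHull_min ?_ (convex_convexHull ℝ _)
  rintro _ ⟨j, rfl⟩
  have hmem : ∀ t, toR (u t) ∈ lsimplex u := fun t => subset_convexHull ℝ _ ⟨t, rfl⟩
  rcases eq_or_ne j i with rfl | hji
  · simpa [dilVert] using hmem j
  have hl0 : (0 : ℝ) < latLen u i j := by exact_mod_cast Nat.pos_of_ne_zero (hl j hji)
  have hr : (rmod u i j k : ℝ) ≤ latLen u i j := by exact_mod_cast Nat.mod_le _ _
  rw [dilVert, if_neg hji]
  exact convex_convexHull ℝ _ (hmem j) (hmem i) (by bound) (by positivity)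
    (by field_simp; ring)

theorem one_add_dilRatio_smul_dilVert {j : Fin m} (hji : j ≠ i) (hk : 0 < k)
    (hkl : k ≤ latLen u i j) :
    (1 + dilRatio (latLen u i j) k) • dilVert u i k j
      = toR (u j) + dilRatio (latLen u i j) k • toR (u i) := by
  have hρ : dilRatio (latLen u i j) k = rmod u i j k / (latLen u i j - rmod u i j k) := by
    rw [dilRatio, Nat.cast_sub (Nat.mod_le _ _)]; rfl
  have hpos : (0 : ℝ) < latLen u i j - rmod u i j k := by
    have : (rmod u i j k : ℝ) < latLen u i j := by
      exact_mod_cast (Nat.mod_lt _ hk).trans_le hkl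
    linarith
  have hl0 : (latLen u i j : ℝ) ≠ 0 := Nat.cast_ne_zero.2 (hk.trans_le hkl).ne'
  rw [dilVert, if_neg hji, smul_add, smul_smul, smul_smul, hρ]
  conv_rhs => rw [← one_smul ℝ (toR (u j))]
  congr 2 <;> field_simp <;> ring

theorem sum_smul_mem_dil (hk : 0 < k) (hkl : ∀ j ≠ i, k ≤ latLen u i j) {μ : Fin m → ℝ}
    (hμ0 : ∀ j, 0 ≤ μ j) (hμ1 : ∑ j, μ j = 1)
    (hμi : ∑ j ∈ univ.erase i, μ j * dilRatio (latLen u i j) k ≤ μ i) :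
    ∑ j, μ j • toR (u j) ∈ dil u i k :=
  sum_smul_mem_convexHull_of_edge_points (by simp [dilVert])
    (fun j hji => one_add_dilRatio_smul_dilVert u hji hk (hkl j hji))
    (fun _ _ => dilRatio_nonneg _ _) hμ0 hμ1 hμi

theorem lsimplex_eq_iUnion_dil (k : Fin m → ℕ) (hk : ∀ i, 0 < k i)
    (hkl : ∀ i, ∀ j ≠ i, k i ≤ latLen u i j)
    (hrow : ∀ i, ∑ j ∈ univ.erase i, dilRatio (latLen u i j) (k i) ≤ 1) :
    lsimplex u = ⋃ i, dil u i (k i) := by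
  refine (Set.iUnion_subset fun i => dil_subset_lsimplex u fun j hji =>
    (hk i).trans_le (hkl i j hji) |>.ne').antisymm' ?_
  intro x hx
  obtain ⟨μ, hμ0, hμ1, rfl⟩ := exists_weights_of_mem_convexHull_range hx
  have : Nonempty (Fin m) := by
    by_contra h
    simp [not_nonempty_iff.1 h] at hμ1
  obtain ⟨i, hi⟩ := Finite.exists_max μ
  refine Set.mem_iUnion.2 ⟨i, sum_smul_mem_dil u (hk i) (hkl i) hμ0 hμ1 ?_⟩
  calc ∑ j ∈ univ.erase i, μ j * dilRatio (latLen u i j) (k i)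
      ≤ ∑ j ∈ univ.erase i, μ i * dilRatio (latLen u i j) (k i) :=
        sum_le_sum fun j _ => mul_le_mul_of_nonneg_right (hi j) (dilRatio_nonneg _ _)
    _ ≤ μ i := by
        rw [← mul_sum]
        exact mul_le_of_le_one_right (hμ0 i) (hrow i)

end Dilation

theorem dim3_cover_by_dilations_general
    (u : Fin 4 → Fin 3 → ℤ)
    (hlen : ∀ i j, i ≠ j → 2 ≤ latLen u i j) :
    ∃ (m : ℕ) (idx : Fin m → Fin 4 × ℕ),
      (∀ a, 2 ≤ (idx a).2 ∧ ∀ j, j ≠ (idx a).1 → (idx a).2 ≤ latLen u (idx a).1 j) ∧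
      lsimplex u = ⋃ a, dil u (idx a).1 (idx a).2 := by
  have hrow (i : Fin 4) := exists_sum_dilRatio_le_one (s := univ.erase i) (l := latLen u i)
    (by simp) fun j hj => hlen i j (ne_of_mem_erase hj).symm
  choose k hk2 hkl hsum using hrow
  have hkl' : ∀ i, ∀ j ≠ i, k i ≤ latLen u i j := fun i j hj =>
    hkl i j (mem_erase_of_ne_of_mem hj (mem_univ j))
  exact ⟨4, fun i => (i, k i), fun i => ⟨hk2 i, hkl' i⟩,
    lsimplex_eq_iUnion_dil u k (fun i => two_pos.trans_le (hk2 i)) hkl' hsum⟩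

/-- a full-dimensional lattice simplex in `ℝ³` with lattice length at least 2
is the union of finitely many of its `k`-dilations `P_{i,k}` (with `2 ≤ k ≤ min_{j≠i} l_{ij}`). -/
theorem dim3_cover_by_dilations
    (u : Fin 4 → Fin 3 → ℤ)
    (hind : AffineIndependent ℝ fun i => toR (u i))
    (hlen : ∀ i j, i ≠ j → 2 ≤ latLen u i j) :
    ∃ (m : ℕ) (idx : Fin m → Fin 4 × ℕ),
      (∀ a, 2 ≤ (idx a).2 ∧ ∀ j, j ≠ (idx a).1 → (idx a).2 ≤ latLen u (idx a).1 j) ∧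
      lsimplex u = ⋃ a, dil u (idx a).1 (idx a).2 :=
  dim3_cover_by_dilations_general u hlen
end
end

section
/- Let P = conv(u_0, u_1, u_2, u_3) ⊆ ℝ^3 be a full-dimensional lattice simplex with lattice length l(P) ≥ 2. For each 0 ≤ i ≤ 3 define A_i = 1 − Σ_{j≠i} r_{ij,2}/(l_{ij} − r_{ij,2}). If A_i ≥ 0 for all 0 ≤ i ≤ 3, then P = P_{0,2} ∪ P_{1,2} ∪ P_{2,2} ∪ P_{3,2}. -/
open Finset Pointwise

noncomputable section

/-!
Write a point `x` of `P` as `∑ λ_j u_j` and let `i` be an index of a largest barycentric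
coordinate. `P_{i,2}` is the convex hull of the points `u_i + c_{ij} (u_j - u_i)` with
`c_{ij} = (l_{ij} - r_{ij,2}) / l_{ij}` (`dilCoeff`), so `x ∈ P_{i,2}` as soon as
`∑_{j ≠ i} λ_j / c_{ij} ≤ 1`.
Since `λ_j / c_{ij} = λ_j + λ_j r_{ij,2} / (l_{ij} - r_{ij,2})` and `λ_j ≤ λ_i`, that sum is at
most `1 - λ_i + λ_i (1 - A_i) ≤ 1`.
-/

open Set AffineMap

section ConvexHull

variable {ι E : Type*} [AddCommGroup E] [Module ℝ E]

theorem exists_sum_smul_eq_of_mem_convexHull_range [Fintype ι] {p : ι → E} {x : E}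
    (hx : x ∈ convexHull ℝ (range p)) :
    ∃ w : ι → ℝ, (∀ j, 0 ≤ w j) ∧ ∑ j, w j = 1 ∧ ∑ j, w j • p j = x := by
  classical
  rw [convexHull_range_eq_exists_affineCombination] at hx
  obtain ⟨s, w, hw₀, hw₁, rfl⟩ := hx
  have hw₁' : ∑ j, (s : Set ι).indicator w j = 1 := by
    rwa [Finset.sum_indicator_subset _ s.subset_univ]
  refine ⟨(s : Set ι).indicator w, fun j => ?_, hw₁', ?_⟩
  · by_cases hj : j ∈ s <;> simp [hj, hw₀]
  · rw [affineCombination_indicator_subset _ _ s.subset_univ,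
      affineCombination_eq_linear_combination _ _ _ hw₁']

theorem convexHull_range_lineMap_subset (p : ι → E) (i : ι) (c : ι → ℝ)
    (hc : ∀ j ≠ i, c j ∈ Set.Icc 0 1) :
    convexHull ℝ (range fun j => lineMap (p i) (p j) (c j)) ⊆ convexHull ℝ (range p) := by
  refine convexHull_min ?_ (convex_convexHull ℝ _)
  rintro _ ⟨j, rfl⟩
  obtain rfl | hj := eq_or_ne j i
  · simpa using subset_convexHull ℝ _ (mem_range_self j)
  · exact (convex_convexHull ℝ _).lineMap_mem (subset_convexHull ℝ _ (mem_range_self i))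
      (subset_convexHull ℝ _ (mem_range_self j)) (hc j hj)

theorem sum_smul_mem_convexHull_range_lineMap [Fintype ι] [DecidableEq ι] (p : ι → E) (i : ι)
    (c w : ι → ℝ) (hc : ∀ j ≠ i, 0 < c j) (hw₀ : ∀ j, 0 ≤ w j) (hw₁ : ∑ j, w j = 1)
    (hle : ∑ j ∈ Finset.univ.erase i, w j / c j ≤ 1) :
    ∑ j, w j • p j ∈ convexHull ℝ (range fun j => lineMap (p i) (p j) (c j)) := by
  set v : ι → ℝ := fun j => if j = i then 1 - ∑ k ∈ Finset.univ.erase i, w k / c k else w j / c j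
  have hv₀ : ∀ j, 0 ≤ v j := fun j => by
    by_cases hj : j = i
    · simpa [v, hj] using hle
    · simpa [v, hj] using div_nonneg (hw₀ j) (hc j hj).le
  have hv₁ : ∑ j, v j = 1 := by
    rw [← Finset.add_sum_erase _ _ (Finset.mem_univ i)]
    simp only [v, if_pos rfl]
    rw [Finset.sum_congr rfl fun j hj => if_neg (Finset.ne_of_mem_erase hj)]
    ring
  have hvc : ∀ j, (v j * c j) • (p j - p i) = w j • (p j - p i) := fun j => by
    by_cases hj : j = i
    · simp [hj]
    · simp [v, hj, div_mul_cancel₀ _ (hc j hj).ne']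
  refine mem_convexHull_of_exists_fintype v _ hv₀ hv₁ (fun j => mem_range_self j) ?_
  calc ∑ j, v j • lineMap (p i) (p j) (c j)
      = ∑ j, (v j * c j) • (p j - p i) + (∑ j, v j) • p i := by
        simp only [lineMap_apply_module', smul_add, mul_smul, Finset.sum_add_distrib,
          Finset.sum_smul]
    _ = ∑ j, w j • (p j - p i) + (∑ j, w j) • p i := by
        rw [hv₁, hw₁, Finset.sum_congr rfl fun j _ => hvc j]
    _ = ∑ j, w j • p j := by
        simp [smul_sub, Finset.sum_sub_distrib, Finset.sum_smul]

theorem sum_erase_div_le_one_of_le [Fintype ι] [DecidableEq ι] (w c : ι → ℝ) (i : ι)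
    (hw₀ : ∀ j, 0 ≤ w j) (hw₁ : ∑ j, w j = 1) (hmax : ∀ j, w j ≤ w i)
    (hc : ∀ j ≠ i, c j ∈ Set.Ioc 0 1) (hsum : ∑ j ∈ Finset.univ.erase i, ((c j)⁻¹ - 1) ≤ 1) :
    ∑ j ∈ Finset.univ.erase i, w j / c j ≤ 1 := by
  calc ∑ j ∈ Finset.univ.erase i, w j / c j
      ≤ ∑ j ∈ Finset.univ.erase i, (w j + w i * ((c j)⁻¹ - 1)) := by
        refine Finset.sum_le_sum fun j hj => ?_
        obtain ⟨hc₀, hc₁⟩ := hc j (Finset.ne_of_mem_erase hj)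
        have : 0 ≤ (c j)⁻¹ - 1 := sub_nonneg.2 (one_le_inv₀ hc₀ |>.2 hc₁)
        calc w j / c j = w j + w j * ((c j)⁻¹ - 1) := by ring
          _ ≤ w j + w i * ((c j)⁻¹ - 1) := by gcongr; exact hmax j
    _ = 1 - w i + w i * ∑ j ∈ Finset.univ.erase i, ((c j)⁻¹ - 1) := by
        rw [Finset.sum_add_distrib, ← Finset.mul_sum, Finset.sum_erase_eq_sub (Finset.mem_univ i),
          hw₁]
    _ ≤ 1 := by nlinarith [hw₀ i]

theorem convexHull_range_eq_iUnion_convexHull_lineMap [Fintype ι] [DecidableEq ι] (p : ι → E)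
    (c : ι → ι → ℝ)
    (hc : ∀ i j, i ≠ j → c i j ∈ Set.Ioc 0 1)
    (hsum : ∀ i, ∑ j ∈ Finset.univ.erase i, ((c i j)⁻¹ - 1) ≤ 1) :
    convexHull ℝ (range p) = ⋃ i, convexHull ℝ (range fun j => lineMap (p i) (p j) (c i j)) := by
  refine subset_antisymm (fun x hx => ?_) (iUnion_subset fun i =>
    convexHull_range_lineMap_subset p i (c i) fun j hj => Ioc_subset_Icc_self (hc i j hj.symm))
  obtain ⟨w, hw₀, hw₁, rfl⟩ := exists_sum_smul_eq_of_mem_convexHull_range hx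
  have : Nonempty ι := by
    by_contra h
    simp [not_nonempty_iff.1 h] at hw₁
  obtain ⟨i, hi⟩ := Finite.exists_max w
  have hc' : ∀ j ≠ i, c i j ∈ Set.Ioc 0 1 := fun j hj => hc i j hj.symm
  have hle := sum_erase_div_le_one_of_le w (c i) i hw₀ hw₁ hi hc' (hsum i)
  exact mem_iUnion.2
    ⟨i, sum_smul_mem_convexHull_range_lineMap p i (c i) w (fun j hj => (hc' j hj).1) hw₀ hw₁ hle⟩

end ConvexHull

section LatticeSimplex

def dilCoeff {n m : ℕ} (u : Fin m → Fin n → ℤ) (i j : Fin m) (k : ℕ) : ℝ :=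
  ((latLen u i j : ℝ) - rmod u i j k) / latLen u i j

variable {n m : ℕ} (u : Fin m → Fin n → ℤ) {i j : Fin m} {k : ℕ}

theorem rmod_lt_latLen (hk : 0 < k) (h : k ≤ latLen u i j) : rmod u i j k < latLen u i j :=
  (Nat.mod_lt _ hk).trans_le h

theorem dilCoeff_mem_Ioc (h : rmod u i j k < latLen u i j) : dilCoeff u i j k ∈ Set.Ioc 0 1 := by
  have h' : (rmod u i j k : ℝ) < latLen u i j := by exact_mod_cast h
  have hr : (0 : ℝ) ≤ rmod u i j k := Nat.cast_nonneg _
  refine ⟨div_pos (sub_pos.2 h') (hr.trans_lt h'), div_le_one_of_le₀ (by linarith) (by linarith)⟩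

theorem inv_dilCoeff_sub_one (h : rmod u i j k < latLen u i j) :
    (dilCoeff u i j k)⁻¹ - 1 = rmod u i j k / ((latLen u i j : ℝ) - rmod u i j k) := by
  have h' : (rmod u i j k : ℝ) < latLen u i j := by exact_mod_cast h
  have hl : (latLen u i j : ℝ) ≠ 0 := ((Nat.cast_nonneg _).trans_lt h').ne'
  have hlr : (latLen u i j : ℝ) - rmod u i j k ≠ 0 := (sub_pos.2 h').ne'
  rw [dilCoeff, inv_div]
  field_simp
  ring

theorem dil_eq_convexHull_lineMap (hl : ∀ j ≠ i, latLen u i j ≠ 0) :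
    dil u i k =
      convexHull ℝ (range fun j => lineMap (toR (u i)) (toR (u j)) (dilCoeff u i j k)) := by
  rw [dil]
  congr 2
  funext j
  by_cases hj : j = i
  · simp [dilVert, hj]
  · have hl' : (latLen u i j : ℝ) ≠ 0 := by exact_mod_cast hl j hj
    rw [dilVert, if_neg hj, lineMap_apply_module, dilCoeff, add_comm]
    congr 2
    field_simp
    ring

end LatticeSimplex

theorem dim3_cover_of_A_nonneg_general
    (u : Fin 4 → Fin 3 → ℤ)
    (hlen : ∀ i j, i ≠ j → 2 ≤ latLen u i j)
    (A : Fin 4 → ℝ)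
    (hA : ∀ i, A i = 1 - ∑ j ∈ Finset.univ.erase i,
      (rmod u i j 2 : ℝ) / ((latLen u i j : ℝ) - (rmod u i j 2 : ℝ)))
    (hAnn : ∀ i, 0 ≤ A i) :
    lsimplex u = dil u 0 2 ∪ dil u 1 2 ∪ dil u 2 2 ∪ dil u 3 2 := by
  have hr : ∀ i j, i ≠ j → rmod u i j 2 < latLen u i j := fun i j hij =>
    rmod_lt_latLen u two_pos (hlen i j hij)
  have hsum : ∀ i, ∑ j ∈ Finset.univ.erase i, ((dilCoeff u i j 2)⁻¹ - 1) ≤ 1 := fun i => by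
    rw [Finset.sum_congr rfl fun j hj =>
      inv_dilCoeff_sub_one u (hr i j (Finset.ne_of_mem_erase hj).symm)]
    linarith [hA i, hAnn i]
  have hdil : ∀ i, dil u i 2 = convexHull ℝ
      (range fun j => lineMap (toR (u i)) (toR (u j)) (dilCoeff u i j 2)) := fun i =>
    dil_eq_convexHull_lineMap u fun j hj => Nat.ne_zero_of_lt (hr i j hj.symm)
  rw [lsimplex, convexHull_range_eq_iUnion_convexHull_lineMap _ _
    (fun i j hij => dilCoeff_mem_Ioc u (hr i j hij)) hsum]
  simp only [← hdil]
  ext x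
  simp [Fin.exists_fin_succ, or_assoc]

/-- in dimension 3, if `A_i = 1 − Σ_{j≠i} r_{ij,2}/(l_{ij} − r_{ij,2}) ≥ 0`
for all `i`, then `P = P_{0,2} ∪ P_{1,2} ∪ P_{2,2} ∪ P_{3,2}`. -/
theorem dim3_cover_of_A_nonneg
    (u : Fin 4 → Fin 3 → ℤ)
    (hind : AffineIndependent ℝ fun i => toR (u i))
    (hlen : ∀ i j, i ≠ j → 2 ≤ latLen u i j)
    (A : Fin 4 → ℝ)
    (hA : ∀ i, A i = 1 - ∑ j ∈ Finset.univ.erase i,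
      (rmod u i j 2 : ℝ) / ((latLen u i j : ℝ) - (rmod u i j 2 : ℝ)))
    (hAnn : ∀ i, 0 ≤ A i) :
    lsimplex u = dil u 0 2 ∪ dil u 1 2 ∪ dil u 2 2 ∪ dil u 3 2 :=
  dim3_cover_of_A_nonneg_general u hlen A hA hAnn
end
end
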